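/- arXiv:2508.16485 — 2 statements merged into one kernel-verified Lean document; each statement's English description precedes it below -/
import Mathlib

section
/- Let f : ℝ → ℝ be smooth with |f''| ≤ M₁ everywhere and π(x) ∝ e^{−f(x)} a probability density satisfying suitable decay. Then for every integer p ≥ 1, ∫_ℝ (f'(x))^{2p} π(x) dx ≤ (2p−1)!! · M₁^p. -/
open MeasureTheory Filter Nat

/-- Let `f : ℝ → ℝ` be smooth with `|f''| ≤ M₁` everywhere and let
`π(x) ∝ e^{−f(x)}` be a probability density with suitable decay. Then for every
integer `p ≥ 1`, `∫ (f'(x))^(2p) π(x) dx ≤ (2p−1)‼ · M₁^p`. -/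
theorem gibbs_deriv_moment_bound (f : ℝ → ℝ) (hf : ContDiff ℝ (⊤ : ℕ∞) f) (M₁ : ℝ)
    (hM : ∀ x, |deriv (deriv f) x| ≤ M₁)
    (hInt : Integrable (fun x => Real.exp (-f x)))
    (Z : ℝ) (hZ : Z = ∫ x, Real.exp (-f x)) (hZpos : 0 < Z)
    (hdecay_top : ∀ n : ℕ,
      Tendsto (fun x => deriv f x ^ (2 * n) * (Real.exp (-f x) / Z)) atTop (nhds 0))
    (hdecay_bot : ∀ n : ℕ,
      Tendsto (fun x => deriv f x ^ (2 * n) * (Real.exp (-f x) / Z)) atBot (nhds 0))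
    (hI : ∀ n : ℕ, Integrable (fun x => deriv f x ^ (2 * n) * (Real.exp (-f x) / Z)))
    (p : ℕ) (hp : 1 ≤ p) :
    ∫ x, deriv f x ^ (2 * p) * (Real.exp (-f x) / Z) ≤ ((2 * p - 1)‼ : ℝ) * M₁ ^ p := by
  have hM₁ : 0 ≤ M₁ := le_trans (abs_nonneg _) (hM 0)
  have hf' : ContDiff ℝ ((⊤ : ℕ∞) : WithTop ℕ∞) f := hf.of_le (by simp)
  have hdf : Differentiable ℝ f := hf'.differentiable (by norm_num)
  have hd : ContDiff ℝ ((⊤ : ℕ∞) : WithTop ℕ∞) (deriv f) := (contDiff_infty_iff_deriv.mp hf').2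
  have hdd : Differentiable ℝ (deriv f) := hd.differentiable (by norm_num)
  have hdd' : Continuous (deriv (deriv f)) := (contDiff_infty_iff_deriv.mp hd).2.continuous
  set d := deriv f with hd_def
  set π : ℝ → ℝ := fun x => Real.exp (-f x) / Z with hπ_def
  have hπpos : ∀ x, 0 < π x := fun x => div_pos (Real.exp_pos _) hZpos
  have hπcont : Continuous π := ((Real.continuous_exp.comp hf.continuous.neg).div_const Z)
  -- integrability of f'' * (f')^(2n) * π
  have hIG : ∀ n : ℕ, Integrable (fun x => deriv d x * (d x ^ (2 * n) * π x)) := by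
    intro n
    refine Integrable.mono' ((hI n).const_mul M₁) ?_ ?_
    · exact (hdd'.mul ((hd.continuous.pow _).mul hπcont)).aestronglyMeasurable
    · filter_upwards with x
      have h1 : 0 ≤ d x ^ (2 * n) * π x :=
        mul_nonneg ((even_two_mul n).pow_nonneg (d x)) (hπpos x).le
      rw [Real.norm_eq_abs, abs_mul, abs_of_nonneg h1]
      exact mul_le_mul_of_nonneg_right (hM x) h1
  -- the key recursion
  have key : ∀ n : ℕ, ∫ x, d x ^ (2 * (n + 1)) * π x
      = (2 * n + 1 : ℝ) * ∫ x, deriv d x * (d x ^ (2 * n) * π x) := by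
    intro n
    set g : ℝ → ℝ := fun x => -(d x ^ (2 * n + 1) * π x) with hg_def
    set g' : ℝ → ℝ := fun x =>
      d x ^ (2 * (n + 1)) * π x - (2 * n + 1 : ℝ) * (deriv d x * (d x ^ (2 * n) * π x))
      with hg'_def
    have hderiv : ∀ x, HasDerivAt g (g' x) x := by
      intro x
      have h1 : HasDerivAt f (d x) x := (hdf x).hasDerivAt
      have h2 : HasDerivAt d (deriv d x) x := (hdd x).hasDerivAt
      have h3 : HasDerivAt (fun x => d x ^ (2 * n + 1))
          ((2 * n + 1 : ℕ) * d x ^ (2 * n + 1 - 1) * deriv d x) x := h2.pow _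
      have h4 : HasDerivAt (fun x => Real.exp (-f x))
          (Real.exp (-f x) * -(d x)) x := h1.neg.exp
      have h5 := ((h3.mul (h4.div_const Z)).neg)
      refine h5.congr_deriv ?_
      simp only [hg'_def, hπ_def]
      push_cast
      field_simp
      ring
    have hint : Integrable g' := by
      exact (hI (n + 1)).sub ((hIG n).const_mul _)
    have hbound : ∀ x, ‖g x‖ ≤
        (1 / 2) * (d x ^ (2 * n) * π x + d x ^ (2 * (n + 1)) * π x) := by
      intro x
      have hπx := (hπpos x).le
      have h1 : ‖g x‖ = |d x| ^ (2 * n + 1) * π x := by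
        rw [Real.norm_eq_abs, hg_def]
        rw [abs_neg, abs_mul, abs_of_nonneg hπx, abs_pow]
      rw [h1]
      have h2 : |d x| ^ (2 * n + 1) ≤ (1 / 2) * (d x ^ (2 * n) + d x ^ (2 * (n + 1))) := by
        have habs : |d x| ^ (2 * n) = d x ^ (2 * n) := by
          rw [← abs_pow, abs_of_nonneg ((even_two_mul n).pow_nonneg (d x))]
        have h3 : |d x| ≤ (1 + d x ^ 2) / 2 := by
          nlinarith [sq_nonneg (|d x| - 1), sq_abs (d x)]
        calc |d x| ^ (2 * n + 1) = |d x| ^ (2 * n) * |d x| := by ring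
          _ ≤ |d x| ^ (2 * n) * ((1 + d x ^ 2) / 2) := by
              exact mul_le_mul_of_nonneg_left h3 (by positivity)
          _ = (1 / 2) * (d x ^ (2 * n) + d x ^ (2 * (n + 1))) := by
              rw [habs]; ring
      calc |d x| ^ (2 * n + 1) * π x
          ≤ ((1 / 2) * (d x ^ (2 * n) + d x ^ (2 * (n + 1)))) * π x :=
            mul_le_mul_of_nonneg_right h2 hπx
        _ = (1 / 2) * (d x ^ (2 * n) * π x + d x ^ (2 * (n + 1)) * π x) := by ring
    have htop : Tendsto g atTop (nhds 0) := by
      apply squeeze_zero_norm hbound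
      have := ((hdecay_top n).add (hdecay_top (n + 1))).const_mul (1 / 2 : ℝ)
      simpa using this
    have hbot : Tendsto g atBot (nhds 0) := by
      apply squeeze_zero_norm hbound
      have := ((hdecay_bot n).add (hdecay_bot (n + 1))).const_mul (1 / 2 : ℝ)
      simpa using this
    have hzero : ∫ x, g' x = 0 := by
      rw [integral_of_hasDerivAt_of_tendsto hderiv hint hbot htop, sub_zero]
    rw [integral_sub (hI (n + 1)) ((hIG n).const_mul _)] at hzero
    rw [integral_const_mul] at hzero
    linarith
  -- the bound by induction
  have main : ∀ n : ℕ, ∫ x, d x ^ (2 * n) * π x ≤ ((2 * n - 1)‼ : ℝ) * M₁ ^ n := by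
    intro n
    induction n with
    | zero =>
      simp only [Nat.mul_zero, pow_zero, one_mul]
      have : ∫ (x : ℝ), π x = 1 := by
        simp only [hπ_def]
        rw [integral_div, ← hZ, div_self hZpos.ne']
      rw [this]
      norm_num [Nat.doubleFactorial]
    | succ n ih =>
      have step1 : ∫ x, deriv d x * (d x ^ (2 * n) * π x) ≤ M₁ * ∫ x, d x ^ (2 * n) * π x := by
        rw [← integral_const_mul]
        apply integral_mono (hIG n) ((hI n).const_mul M₁)
        intro x
        have h1 : 0 ≤ d x ^ (2 * n) * π x :=
          mul_nonneg ((even_two_mul n).pow_nonneg (d x)) (hπpos x).le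
        calc deriv d x * (d x ^ (2 * n) * π x)
            ≤ |deriv d x| * (d x ^ (2 * n) * π x) :=
              mul_le_mul_of_nonneg_right (le_abs_self _) h1
          _ ≤ M₁ * (d x ^ (2 * n) * π x) := mul_le_mul_of_nonneg_right (hM x) h1
      have hDF : ((2 * (n + 1) - 1)‼ : ℝ) = (2 * n + 1 : ℝ) * ((2 * n - 1)‼ : ℝ) := by
        cases n with
        | zero => norm_num [Nat.doubleFactorial]
        | succ m =>
          have h1 : 2 * (m + 1 + 1) - 1 = (2 * m + 1) + 2 := by omega
          have h2 : 2 * (m + 1) - 1 = 2 * m + 1 := by omega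
          rw [h1, h2, Nat.doubleFactorial]
          push_cast
          ring
      calc ∫ x, d x ^ (2 * (n + 1)) * π x
          = (2 * n + 1 : ℝ) * ∫ x, deriv d x * (d x ^ (2 * n) * π x) := key n
        _ ≤ (2 * n + 1 : ℝ) * (M₁ * ∫ x, d x ^ (2 * n) * π x) := by
            apply mul_le_mul_of_nonneg_left step1 (by positivity)
        _ ≤ (2 * n + 1 : ℝ) * (M₁ * (((2 * n - 1)‼ : ℝ) * M₁ ^ n)) := by
            apply mul_le_mul_of_nonneg_left _ (by positivity)
            exact mul_le_mul_of_nonneg_left ih hM₁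
        _ = ((2 * (n + 1) - 1)‼ : ℝ) * M₁ ^ (n + 1) := by
            rw [hDF]; ring
  exact main p
end

section
/- Let W be a d-dimensional Brownian motion, f : ℝᵈ → ℝ with ∇³f having operator norm bounded by M₂, and let (xₜ,vₜ) be the stationary underdamped Langevin diffusion with ‖v_r‖_{L₄} ≤ 3^{1/4}√(ud) for all r. Then ‖σu ∫_{t_n}^{t_{n+1}} ∫_{t_n}^{r₁} ∫_{t_n}^{r₂} ∇³f(x_{t_n})(v_{r₂}, W_{t_n,r₃}) dr₃ dr₂ dr₁‖_{L₂} ≤ (8√3/105) σ u^{1.5} M₂ d h^{3.5}, where h = t_{n+1} − t_n. -/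
/-!
Bound the integrand pointwise by `M₂ ‖v r₂‖ ‖W r₃ - W tn‖`: the norm of the triple integral is
then at most a Lebesgue integral over the simplex `tn < r₃ ≤ r₂ ≤ r₁ ≤ tn + h`. Minkowski's
integral inequality moves the `L²(P)` norm inside that integral, Hölder with exponents `(4, 4)`
bounds the `L²` norm of the integrand by `√3 M₂ √u d √(r₃ - tn)`, and the integral of
`√(r₃ - tn)` over the simplex is `(8/105) h^(7/2)`.
-/

open MeasureTheory ENNReal Set

theorem eLpNorm_two_lintegral_le_lintegral_eLpNorm {α Ω : Type*} [MeasurableSpace α]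
    [MeasurableSpace Ω] {μ : Measure α} {P : Measure Ω} [SFinite μ] [SFinite P] {G : α → Ω → ℝ≥0∞}
    (hG : Measurable (Function.uncurry G)) :
    eLpNorm (fun ω => ∫⁻ a, G a ω ∂μ) 2 P ≤ ∫⁻ a, eLpNorm (G a) 2 P ∂μ := by
  have hsq : ∀ g : Ω → ℝ≥0∞, eLpNorm g 2 P ^ 2 = ∫⁻ ω, g ω ^ 2 ∂P := fun g => by
    simpa using eLpNorm_nnreal_pow_eq_lintegral (f := g) (μ := P) (p := 2) two_ne_zero
  have hGa : ∀ a, Measurable (G a) := fun a => hG.comp measurable_prodMk_left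
  have hGω : ∀ ω, Measurable (G · ω) := fun ω => hG.comp measurable_prodMk_right
  have hN : Measurable fun a => eLpNorm (G a) 2 P := by
    simp_rw [eLpNorm_eq_lintegral_rpow_enorm_toReal two_ne_zero ofNat_ne_top]
    exact (Measurable.lintegral_prod_right' (hG.enorm.pow_const _)).pow_const _
  have cauchy_schwarz : ∀ a b, ∫⁻ ω, G a ω * G b ω ∂P ≤ eLpNorm (G a) 2 P * eLpNorm (G b) 2 P := by
    intro a b
    simpa [eLpNorm_eq_lintegral_rpow_enorm_toReal] using
      ENNReal.lintegral_mul_le_Lp_mul_Lq P Real.HolderConjugate.two_two (hGa a).aemeasurable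
        (hGa b).aemeasurable
  rw [← ENNReal.pow_le_pow_left_iff two_ne_zero, hsq]
  calc ∫⁻ ω, (∫⁻ a, G a ω ∂μ) ^ 2 ∂P
      = ∫⁻ ω, ∫⁻ z, G z.1 ω * G z.2 ω ∂μ.prod μ ∂P := by
        simp_rw [sq, lintegral_prod_mul (hGω _).aemeasurable (hGω _).aemeasurable]
    _ = ∫⁻ z, ∫⁻ ω, G z.1 ω * G z.2 ω ∂P ∂μ.prod μ :=
        lintegral_lintegral_swap ((hG.comp (measurable_snd.fst.prodMk measurable_fst)).mul
          (hG.comp (measurable_snd.snd.prodMk measurable_fst))).aemeasurable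
    _ ≤ ∫⁻ z, eLpNorm (G z.1) 2 P * eLpNorm (G z.2) 2 P ∂μ.prod μ :=
        lintegral_mono fun z => cauchy_schwarz z.1 z.2
    _ = (∫⁻ a, eLpNorm (G a) 2 P ∂μ) ^ 2 := by
        rw [lintegral_prod_mul hN.aemeasurable hN.aemeasurable, sq]

theorem eLpNorm_two_mul_norm_le {Ω E F : Type*} [MeasurableSpace Ω] {P : Measure Ω}
    [NormedAddCommGroup E] [NormedAddCommGroup F] {f : Ω → E} {g : Ω → F}
    (hf : AEStronglyMeasurable f P) (hg : AEStronglyMeasurable g P) (c : ℝ) :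
    eLpNorm (fun ω => c * ‖f ω‖ * ‖g ω‖) 2 P ≤ ‖c‖ₑ * eLpNorm f 4 P * eLpNorm g 4 P := by
  have : HolderTriple 4 4 2 := ⟨by
    rw [show (4 : ℝ≥0∞) = 2 * 2 by norm_num, ENNReal.mul_inv (by simp) (by simp), ← mul_add,
      ENNReal.inv_two_add_inv_two, mul_one]⟩
  exact eLpNorm_le_eLpNorm_mul_eLpNorm'_of_norm hf hg (fun x y => c * ‖x‖ * ‖y‖) ‖c‖₊
    (ae_of_all _ fun ω => by simp)

theorem eLpNorm_two_mul_norm_le_of_fourth_moments {Ω E F : Type*} [MeasurableSpace Ω]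
    {P : Measure Ω} [NormedAddCommGroup E] [NormedAddCommGroup F] {f : Ω → E} {g : Ω → F}
    (hf : AEStronglyMeasurable f P) (hg : AEStronglyMeasurable g P) {c u d t : ℝ} (hc : 0 ≤ c)
    (hu : 0 ≤ u) (hd : 0 ≤ d)
    (hf4 : eLpNorm f 4 P ≤ ENNReal.ofReal ((3 : ℝ) ^ (1 / 4 : ℝ) * √(u * d)))
    (hg4 : eLpNorm g 4 P ≤ ENNReal.ofReal ((3 : ℝ) ^ (1 / 4 : ℝ) * √(d * t))) :
    eLpNorm (fun ω => c * ‖f ω‖ * ‖g ω‖) 2 P ≤ ENNReal.ofReal (√3 * c * √u * d * √t) := by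
  have h3 : (3 : ℝ) ^ (1 / 4 : ℝ) * 3 ^ (1 / 4 : ℝ) = √3 := by
    rw [← Real.rpow_add (by norm_num), Real.sqrt_eq_rpow]
    norm_num
  have hdd : √d * √d = d := Real.mul_self_sqrt hd
  calc _ ≤ ‖c‖ₑ * eLpNorm f 4 P * eLpNorm g 4 P := eLpNorm_two_mul_norm_le hf hg c
    _ ≤ ENNReal.ofReal c * ENNReal.ofReal (3 ^ (1 / 4 : ℝ) * √(u * d))
          * ENNReal.ofReal (3 ^ (1 / 4 : ℝ) * √(d * t)) := by
        rw [Real.enorm_eq_ofReal hc]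
        gcongr
    _ = _ := by
        rw [← ENNReal.ofReal_mul hc, ← ENNReal.ofReal_mul (by positivity), Real.sqrt_mul hu,
          Real.sqrt_mul hd]
        congr 1
        linear_combination (c * √u * √d * √d * √t) * h3 + (√3 * c * √u * √t) * hdd

theorem setLIntegral_prod_of_fibers {α β : Type*} [MeasurableSpace α] [MeasurableSpace β]
    {μ : Measure α} {ν : Measure β} [SFinite ν] {s : Set α} {t : α → Set β}
    (hs : MeasurableSet s) (ht : ∀ x, MeasurableSet (t x))
    (hst : MeasurableSet {z : α × β | z.1 ∈ s ∧ z.2 ∈ t z.1})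
    {f : α × β → ℝ≥0∞} (hf : Measurable f) :
    ∫⁻ z in {z : α × β | z.1 ∈ s ∧ z.2 ∈ t z.1}, f z ∂μ.prod ν =
      ∫⁻ x in s, ∫⁻ y in t x, f (x, y) ∂ν ∂μ := by
  rw [← lintegral_indicator hst, lintegral_prod _ (hf.indicator hst).aemeasurable,
    ← lintegral_indicator hs]
  refine lintegral_congr fun x => ?_
  by_cases hx : x ∈ s
  · rw [indicator_of_mem hx, ← lintegral_indicator (ht x)]
    refine lintegral_congr fun y => ?_
    by_cases hy : y ∈ t x
    · rw [indicator_of_mem hy, indicator_of_mem (show (x, y) ∈ {z : α × β | z.1 ∈ s ∧ z.2 ∈ t z.1}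
        from ⟨hx, hy⟩)]
    · rw [indicator_of_notMem hy, indicator_of_notMem fun h => hy h.2]
  · rw [indicator_of_notMem hx, ← lintegral_zero]
    exact lintegral_congr fun y => indicator_of_notMem (fun h => hx h.1) _

def orderedSimplex (a b : ℝ) : Set (ℝ × ℝ × ℝ) :=
  {p | a < p.2.2 ∧ p.2.2 ≤ p.2.1 ∧ p.2.1 ≤ p.1 ∧ p.1 ≤ b}

theorem measurableSet_orderedSimplex (a b : ℝ) : MeasurableSet (orderedSimplex a b) := by
  simp only [orderedSimplex, ofPred_and]
  measurability

theorem lintegral_orderedSimplex (a b : ℝ) {F : ℝ × ℝ × ℝ → ℝ≥0∞} (hF : Measurable F) :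
    ∫⁻ p in orderedSimplex a b, F p =
      ∫⁻ r₁ in Ioc a b, ∫⁻ r₂ in Ioc a r₁, ∫⁻ r₃ in Ioc a r₂, F (r₁, r₂, r₃) := by
  have hfib : ∀ c, MeasurableSet {q : ℝ × ℝ | q.1 ∈ Ioc a c ∧ q.2 ∈ Ioc a q.1} := fun c => by
    simp only [mem_Ioc, ofPred_and]
    measurability
  have hS : orderedSimplex a b =
      {p : ℝ × ℝ × ℝ | p.1 ∈ Ioc a b ∧ p.2 ∈ {q : ℝ × ℝ | q.1 ∈ Ioc a p.1 ∧ q.2 ∈ Ioc a q.1}} := by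
    ext ⟨r₁, r₂, r₃⟩
    simp only [orderedSimplex, mem_ofPred_eq, mem_Ioc]
    constructor
    · rintro ⟨h₃, h₂, h₁, h₀⟩
      exact ⟨⟨by linarith, h₀⟩, ⟨by linarith, h₁⟩, h₃, h₂⟩
    · rintro ⟨⟨_, h₀⟩, ⟨_, h₁⟩, h₃, h₂⟩
      exact ⟨h₃, h₂, h₁, h₀⟩
  rw [Measure.volume_eq_prod, hS, setLIntegral_prod_of_fibers measurableSet_Ioc hfib
    (hS ▸ measurableSet_orderedSimplex a b) hF]
  refine setLIntegral_congr_fun measurableSet_Ioc fun r₁ _ => ?_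
  rw [Measure.volume_eq_prod]
  exact setLIntegral_prod_of_fibers (t := fun r₂ => Ioc a r₂) measurableSet_Ioc
    (fun _ => measurableSet_Ioc) (hfib r₁) (hF.comp measurable_prodMk_left)

theorem enorm_iteratedIntegral_le {E : Type*} [NormedAddCommGroup E] [NormedSpace ℝ E]
    {a b : ℝ} (hab : a ≤ b) {g : ℝ → ℝ → ℝ → E} {G : ℝ × ℝ × ℝ → ℝ≥0∞}
    (hgG : ∀ r₁ r₂ r₃, ‖g r₁ r₂ r₃‖ₑ ≤ G (r₁, r₂, r₃)) :
    ‖∫ r₁ in a..b, ∫ r₂ in a..r₁, ∫ r₃ in a..r₂, g r₁ r₂ r₃‖ₑ ≤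
      ∫⁻ r₁ in Ioc a b, ∫⁻ r₂ in Ioc a r₁, ∫⁻ r₃ in Ioc a r₂, G (r₁, r₂, r₃) := by
  have single : ∀ {c d : ℝ} {φ : ℝ → E} {B : ℝ → ℝ≥0∞}, c ≤ d → (∀ x ∈ Ioc c d, ‖φ x‖ₑ ≤ B x) →
      ‖∫ x in c..d, φ x‖ₑ ≤ ∫⁻ x in Ioc c d, B x := fun hcd hB => by
    rw [intervalIntegral.integral_of_le hcd]
    exact (enorm_integral_le_lintegral_enorm _).trans (setLIntegral_mono' measurableSet_Ioc hB)
  exact single hab fun r₁ hr₁ => single hr₁.1.le fun r₂ hr₂ => single hr₂.1.le fun r₃ _ =>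
    hgG r₁ r₂ r₃

theorem eLpNorm_two_iteratedIntegral_le {Ω E : Type*} [MeasurableSpace Ω] {P : Measure Ω}
    [SFinite P] [NormedAddCommGroup E] [NormedSpace ℝ E] {a b : ℝ} (hab : a ≤ b)
    {g : ℝ → ℝ → ℝ → Ω → E} {F : ℝ × ℝ × ℝ → Ω → ℝ} (hF : Measurable (Function.uncurry F))
    (hgF : ∀ r₁ r₂ r₃ ω, ‖g r₁ r₂ r₃ ω‖ ≤ F (r₁, r₂, r₃) ω) :
    eLpNorm (fun ω => ∫ r₁ in a..b, ∫ r₂ in a..r₁, ∫ r₃ in a..r₂, g r₁ r₂ r₃ ω) 2 P ≤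
      ∫⁻ p in orderedSimplex a b, eLpNorm (F p) 2 P := by
  have hG : Measurable (Function.uncurry fun p ω => ‖F p ω‖ₑ) := hF.enorm
  calc _ ≤ eLpNorm (fun ω => ∫⁻ p in orderedSimplex a b, ‖F p ω‖ₑ) 2 P := by
        refine eLpNorm_mono_enorm fun ω => ?_
        rw [enorm_eq_self, lintegral_orderedSimplex a b (F := fun p => ‖F p ω‖ₑ)
          (hG.comp (measurable_id.prodMk measurable_const))]
        exact enorm_iteratedIntegral_le hab (G := fun p => ‖F p ω‖ₑ) fun r₁ r₂ r₃ =>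
          enorm_le_iff_norm_le.2 ((hgF r₁ r₂ r₃ ω).trans (Real.le_norm_self (F (r₁, r₂, r₃) ω)))
    _ ≤ ∫⁻ p in orderedSimplex a b, eLpNorm (fun ω => ‖F p ω‖ₑ) 2 P :=
        eLpNorm_two_lintegral_le_lintegral_eLpNorm hG
    _ = ∫⁻ p in orderedSimplex a b, eLpNorm (F p) 2 P := by
        simp_rw [eLpNorm_enorm]

theorem lintegral_Ioc_ofReal_mul_rpow_sub {a b : ℝ} (hab : a ≤ b) {c p : ℝ} (hc : 0 ≤ c)
    (hp : -1 < p) :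
    ∫⁻ x in Ioc a b, ENNReal.ofReal (c * (x - a) ^ p) =
      ENNReal.ofReal (c * (b - a) ^ (p + 1) / (p + 1)) := by
  have hint : IntervalIntegrable (fun x => c * (x - a) ^ p) volume a b := by
    have := (intervalIntegral.intervalIntegrable_rpow' hp (a := 0) (b := b - a)).comp_sub_right a
    rw [zero_add, sub_add_cancel] at this
    exact this.const_mul c
  rw [← ofReal_integral_eq_lintegral_ofReal
    ((intervalIntegrable_iff_integrableOn_Ioc_of_le hab).1 hint)
    (ae_restrict_of_forall_mem measurableSet_Ioc fun x hx =>
      mul_nonneg hc (Real.rpow_nonneg (sub_nonneg.2 hx.1.le) p)),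
    ← intervalIntegral.integral_of_le hab, intervalIntegral.integral_const_mul,
    intervalIntegral.integral_comp_sub_right (· ^ p), integral_rpow (Or.inl hp), sub_self,
    Real.zero_rpow (by linarith), sub_zero, mul_div_assoc']

theorem lintegral_orderedSimplex_sqrt {a b : ℝ} (hab : a ≤ b) {c : ℝ} (hc : 0 ≤ c) :
    ∫⁻ p in orderedSimplex a b, ENNReal.ofReal (c * √(p.2.2 - a)) =
      ENNReal.ofReal (8 / 105 * c * (b - a) ^ (7 / 2 : ℝ)) := by
  have integrate : ∀ {x k : ℝ} (q q' : ℝ), a ≤ x → 0 ≤ k → 0 ≤ q → q + 1 = q' →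
      ∫⁻ y in Ioc a x, ENNReal.ofReal (k * (y - a) ^ q) =
        ENNReal.ofReal (k / q' * (x - a) ^ q') := fun q q' hx hk hq hq' => by
    rw [lintegral_Ioc_ofReal_mul_rpow_sub hx hk (by linarith), mul_div_right_comm, hq']
  have inner : ∀ r₁, a ≤ r₁ → ∫⁻ r₂ in Ioc a r₁, ∫⁻ r₃ in Ioc a r₂,
      ENNReal.ofReal (c * (r₃ - a) ^ (1 / 2 : ℝ)) =
        ENNReal.ofReal (c / (3 / 2) / (5 / 2) * (r₁ - a) ^ (5 / 2 : ℝ)) := fun r₁ hr₁ => by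
    rw [setLIntegral_congr_fun measurableSet_Ioc fun r₂ hr₂ =>
      integrate (1 / 2) (3 / 2) hr₂.1.le hc (by norm_num) (by norm_num),
      integrate _ (5 / 2) hr₁ (by positivity) (by norm_num) (by norm_num)]
  simp_rw [Real.sqrt_eq_rpow]
  rw [lintegral_orderedSimplex a b (by fun_prop), setLIntegral_congr_fun measurableSet_Ioc
    fun r₁ hr₁ => inner r₁ hr₁.1.le,
    integrate _ (7 / 2) hab (by positivity) (by norm_num) (by norm_num)]
  congr 1
  ring

theorem triple_integral_third_deriv_L2_bound_general {Ω : Type*} [MeasurableSpace Ω]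
    (P : Measure Ω) [IsProbabilityMeasure P] {d : ℕ}
    (f : EuclideanSpace ℝ (Fin d) → ℝ)
    (M₂ γ u : ℝ) (hM₂ : 0 ≤ M₂) (hu : 0 < u)
    (hbound : ∀ z a b, ‖fderiv ℝ (fderiv ℝ (gradient f)) z a b‖ ≤ M₂ * ‖a‖ * ‖b‖)
    (W x v : ℝ → Ω → EuclideanSpace ℝ (Fin d))
    (tn h : ℝ) (hh : 0 < h)
    (hWmeas : Measurable (Function.uncurry W))
    (hvmeas : Measurable (Function.uncurry v))
    (hv4 : ∀ r : ℝ, eLpNorm (v r) 4 P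
        ≤ ENNReal.ofReal ((3 : ℝ) ^ ((1 : ℝ) / 4) * Real.sqrt (u * d)))
    (hW4 : ∀ r : ℝ, tn ≤ r → r ≤ tn + h →
      eLpNorm (fun ω => W r ω - W tn ω) 4 P
        ≤ ENNReal.ofReal ((3 : ℝ) ^ ((1 : ℝ) / 4) * Real.sqrt (d * (r - tn)))) :
    eLpNorm (fun ω =>
        (Real.sqrt (2 * γ * u) * u) •
          ∫ r₁ in tn..(tn + h), ∫ r₂ in tn..r₁, ∫ r₃ in tn..r₂,
            fderiv ℝ (fderiv ℝ (gradient f)) (x tn ω) (v r₂ ω) (W r₃ ω - W tn ω)) 2 P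
      ≤ ENNReal.ofReal (8 * Real.sqrt 3 / 105 * Real.sqrt (2 * γ * u)
          * u ^ (1.5 : ℝ) * M₂ * d * h ^ (3.5 : ℝ)) := by
  have hF : Measurable (Function.uncurry
      fun (p : ℝ × ℝ × ℝ) ω => M₂ * ‖v p.2.1 ω‖ * ‖W p.2.2 ω - W tn ω‖) :=
    (measurable_const.mul (hvmeas.comp (measurable_fst.snd.fst.prodMk measurable_snd)).norm).mul
      ((hWmeas.comp (measurable_fst.snd.snd.prodMk measurable_snd)).sub
        (hWmeas.comp (measurable_const.prodMk measurable_snd))).norm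
  have moment : ∀ p ∈ orderedSimplex tn (tn + h),
      eLpNorm (fun ω => M₂ * ‖v p.2.1 ω‖ * ‖W p.2.2 ω - W tn ω‖) 2 P ≤
        ENNReal.ofReal (√3 * M₂ * √u * d * √(p.2.2 - tn)) := by
    rintro ⟨r₁, r₂, r₃⟩ ⟨h₃, h₂, h₁, h₀⟩
    have hsec : ∀ {V : ℝ → Ω → EuclideanSpace ℝ (Fin d)}, Measurable (Function.uncurry V) →
        ∀ r, AEStronglyMeasurable (V r) P :=
      fun hV r => (hV.comp measurable_prodMk_left).aestronglyMeasurable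
    exact eLpNorm_two_mul_norm_le_of_fourth_moments (hsec hvmeas r₂)
      ((hsec hWmeas r₃).sub (hsec hWmeas tn)) hM₂ hu.le (Nat.cast_nonneg d) (hv4 r₂)
      (hW4 r₃ h₃.le (by linarith))
  calc _ = ‖√(2 * γ * u) * u‖ₑ * eLpNorm _ 2 P := eLpNorm_const_smul _ _ _ _
    _ ≤ ‖√(2 * γ * u) * u‖ₑ * ∫⁻ p in orderedSimplex tn (tn + h),
          eLpNorm (fun ω => M₂ * ‖v p.2.1 ω‖ * ‖W p.2.2 ω - W tn ω‖) 2 P := by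
      gcongr
      exact eLpNorm_two_iteratedIntegral_le (by linarith) hF fun _ _ _ _ => hbound _ _ _
    _ ≤ ‖√(2 * γ * u) * u‖ₑ * ∫⁻ p in orderedSimplex tn (tn + h),
          ENNReal.ofReal (√3 * M₂ * √u * d * √(p.2.2 - tn)) := by
      gcongr ‖_‖ₑ * ?_
      exact setLIntegral_mono' (measurableSet_orderedSimplex _ _) moment
    _ = _ := by
      have hu32 : u ^ (1.5 : ℝ) = u * √u := by
        rw [show (1.5 : ℝ) = 1 + 1 / 2 by norm_num, Real.rpow_add hu, Real.rpow_one,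
          Real.sqrt_eq_rpow]
      rw [lintegral_orderedSimplex_sqrt (by linarith) (by positivity), add_sub_cancel_left,
        Real.enorm_eq_ofReal (by positivity), ← ENNReal.ofReal_mul (by positivity), hu32,
        show (3.5 : ℝ) = 7 / 2 by norm_num]
      congr 1
      ring

/-- With `σ = √(2γu)`, `h = t_{n+1} − t_n`, a Brownian motion `W`
satisfying the fourth-moment bound `‖W_{t_n,r}‖_{L₄} ≤ 3^{1/4}√(d(r−t_n))`, a
stationary underdamped Langevin velocity with `‖v_r‖_{L₄} ≤ 3^{1/4}√(ud)`, and
`‖∇³f‖_op ≤ M₂`, the iterated stochastic integral satisfies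
`‖σu ∫∫∫ ∇³f(x_{t_n})(v_{r₂}, W_{t_n,r₃}) dr₃ dr₂ dr₁‖_{L₂}
  ≤ (8√3/105) σ u^{1.5} M₂ d h^{3.5}`. -/
theorem triple_integral_third_deriv_L2_bound {Ω : Type*} [MeasurableSpace Ω]
    (P : Measure Ω) [IsProbabilityMeasure P] {d : ℕ}
    (f : EuclideanSpace ℝ (Fin d) → ℝ) (hf : ContDiff ℝ 3 f)
    (M₂ γ u : ℝ) (hM₂ : 0 ≤ M₂) (hγ : 0 < γ) (hu : 0 < u)
    (hbound : ∀ z a b, ‖fderiv ℝ (fderiv ℝ (gradient f)) z a b‖ ≤ M₂ * ‖a‖ * ‖b‖)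
    (W x v : ℝ → Ω → EuclideanSpace ℝ (Fin d))
    (tn h : ℝ) (hh : 0 < h)
    (hWmeas : Measurable (Function.uncurry W))
    (hvmeas : Measurable (Function.uncurry v))
    (hxmeas : Measurable (x tn))
    (hv4 : ∀ r : ℝ, eLpNorm (v r) 4 P
        ≤ ENNReal.ofReal ((3 : ℝ) ^ ((1 : ℝ) / 4) * Real.sqrt (u * d)))
    (hW4 : ∀ r : ℝ, tn ≤ r → r ≤ tn + h →
      eLpNorm (fun ω => W r ω - W tn ω) 4 P
        ≤ ENNReal.ofReal ((3 : ℝ) ^ ((1 : ℝ) / 4) * Real.sqrt (d * (r - tn)))) :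
    eLpNorm (fun ω =>
        (Real.sqrt (2 * γ * u) * u) •
          ∫ r₁ in tn..(tn + h), ∫ r₂ in tn..r₁, ∫ r₃ in tn..r₂,
            fderiv ℝ (fderiv ℝ (gradient f)) (x tn ω) (v r₂ ω) (W r₃ ω - W tn ω)) 2 P
      ≤ ENNReal.ofReal (8 * Real.sqrt 3 / 105 * Real.sqrt (2 * γ * u)
          * u ^ (1.5 : ℝ) * M₂ * d * h ^ (3.5 : ℝ)) :=
  triple_integral_third_deriv_L2_bound_general P f M₂ γ u hM₂ hu hbound W x v tn h hh hWmeas hvmeas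
    hv4 hW4
end
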